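/- Let T be a triangulated category with thick subcategory T^p, and let 𝒳, 𝒴 be subcategories such that T = 𝒳 ⊥ 𝒳^⊥ and T = ^⊥𝒴 ⊥ 𝒴 are co-t-structures and 𝒳 ⊥ 𝒴 is a co-t-structure on T^p. Set 𝒵 = 𝒳^⊥ ∩ ^⊥(Σ𝒴). Then for every object X of T there exists Z ∈ 𝒵 with X ≅ Z in the Verdier quotient T/T^p. -/

import Mathlib

/-!
The first co-t-structure gives a triangle `A → X → B → ΣA` with `A ∈ 𝒳 ⊆ T^p`, so `X ≅ B` in
`T/T^p` and `B ∈ 𝒳^⊥`. The second decomposes `Σ⁻¹B` as `L → Σ⁻¹B → Y → ΣL` with `L ∈ ^⊥𝒴` and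
`Y ∈ 𝒴 ⊆ T^p`, so `Z = ΣL` is isomorphic to `B` in `T/T^p` and lies in `^⊥(Σ𝒴)`. Rotating,
`Z` is an extension of `B` by `Y`; both lie in `𝒳^⊥` (for `Y` because `Hom(𝒳, 𝒴) = 0`), hence so does `Z`.
-/

open CategoryTheory Category Limits Pretriangulated

universe v u v' u'

variable {T : Type u} [Category.{v} T] [HasZeroObject T] [HasShift T ℤ]
  [Preadditive T] [∀ n : ℤ, (shiftFunctor T n).Additive] [Pretriangulated T]

/-- Ported: `Triangulated.Subcategory` as it stood in Mathlib (Dec 2024), removed since. -/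
structure CategoryTheory.Triangulated.Subcategory (C : Type*) [Category C] [HasZeroObject C]
    [HasShift C ℤ] [Preadditive C] [∀ n : ℤ, (shiftFunctor C n).Additive]
    [Pretriangulated C] where
  P : C → Prop
  zero' : ∃ (Z : C) (_ : IsZero Z), P Z
  shift (X : C) (n : ℤ) : P X → P (X⟦n⟧)
  ext₂' (T : Triangle C) (_ : T ∈ distTriang C) : P T.obj₁ → P T.obj₃ →
    (∃ (Y : C) (_ : P Y), Nonempty (T.obj₂ ≅ Y))

/-- Ported: `Triangulated.Subcategory.W` as it stood in Mathlib (Dec 2024). -/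
def CategoryTheory.Triangulated.Subcategory.W {C : Type*} [Category C] [HasZeroObject C]
    [HasShift C ℤ] [Preadditive C] [∀ n : ℤ, (shiftFunctor C n).Additive]
    [Pretriangulated C] (S : Triangulated.Subcategory C) : MorphismProperty C :=
  fun X Y f => ∃ (Z : C) (g : Y ⟶ Z) (h : Z ⟶ X⟦(1 : ℤ)⟧)
    (_ : Triangle.mk f g h ∈ distTriang C), S.P Z

/-- The right orthogonal of a class of objects. -/
def rperp (𝒜 : Set T) : Set T := {B | ∀ A ∈ 𝒜, ∀ f : A ⟶ B, f = 0}

/-- The left orthogonal of a class of objects. -/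
def lperp (ℬ : Set T) : Set T := {A | ∀ B ∈ ℬ, ∀ f : A ⟶ B, f = 0}

/-- A co-t-structure `𝒜 ⊥ ℬ` on the class of objects `Pc`:  `Hom(𝒜, ℬ) = 0`,
`Σ⁻¹𝒜 ⊆ 𝒜`, `Σℬ ⊆ ℬ`, and every object of `Pc` sits in a distinguished triangle
`A → X → B → ΣA` with `A ∈ 𝒜`, `B ∈ ℬ`. -/
structure IsCotStructureOn (Pc 𝒜 ℬ : Set T) : Prop where
  orth : ∀ A ∈ 𝒜, ∀ B ∈ ℬ, ∀ f : A ⟶ B, f = 0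
  shiftA : ∀ A ∈ 𝒜, A⟦(-1 : ℤ)⟧ ∈ 𝒜
  shiftB : ∀ B ∈ ℬ, B⟦(1 : ℤ)⟧ ∈ ℬ
  tri : ∀ X ∈ Pc, ∃ (A B : T) (_ : A ∈ 𝒜) (_ : B ∈ ℬ)
    (f : A ⟶ X) (g : X ⟶ B) (h : B ⟶ A⟦(1 : ℤ)⟧),
    Triangle.mk f g h ∈ distTriang T

namespace CategoryTheory.Triangulated.Subcategory

variable (S : Subcategory T)

lemma W_mor₂_of_mem_obj₁ {Tr : Triangle T} (hTr : Tr ∈ distTriang T) (h₁ : S.P Tr.obj₁) :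
    S.W Tr.mor₂ :=
  ⟨_, Tr.mor₃, _, rot_of_distTriang _ hTr, S.shift _ 1 h₁⟩

lemma isIso_map_mor₂_of_mem_obj₁ {D : Type u'} [Category.{v'} D] (Q : T ⥤ D)
    [Q.IsLocalization S.W] {Tr : Triangle T} (hTr : Tr ∈ distTriang T) (h₁ : S.P Tr.obj₁) :
    IsIso (Q.map Tr.mor₂) :=
  Localization.inverts Q S.W _ (S.W_mor₂_of_mem_obj₁ hTr h₁)

end CategoryTheory.Triangulated.Subcategory

omit [HasZeroObject T] [HasShift T ℤ] [∀ n : ℤ, (shiftFunctor T n).Additive] [Pretriangulated T] in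
lemma mem_rperp_of_iso {𝒜 : Set T} {B B' : T} (e : B ≅ B') (hB : B ∈ rperp 𝒜) :
    B' ∈ rperp 𝒜 :=
  fun A hA f => (cancel_mono e.inv).1 (by rw [hB A hA (f ≫ e.inv), zero_comp])

lemma mem_rperp_obj₂_of_distTriang {𝒜 : Set T} {Tr : Triangle T} (hTr : Tr ∈ distTriang T)
    (h₁ : Tr.obj₁ ∈ rperp 𝒜) (h₃ : Tr.obj₃ ∈ rperp 𝒜) : Tr.obj₂ ∈ rperp 𝒜 := by
  intro A hA f
  obtain ⟨g, rfl⟩ := Triangle.coyoneda_exact₂ Tr hTr f (h₃ A hA _)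
  rw [h₁ A hA g, zero_comp]

omit [HasZeroObject T] [Pretriangulated T] in
lemma shift_mem_lperp_image_shift {ℬ : Set T} {L : T} (hL : L ∈ lperp ℬ) (n : ℤ) :
    L⟦n⟧ ∈ lperp ((fun B : T => B⟦n⟧) '' ℬ) := by
  rintro _ ⟨B, hB, rfl⟩ φ
  obtain ⟨ψ, rfl⟩ := (shiftFunctor T n).map_surjective φ
  rw [hL B hB ψ, Functor.map_zero]

theorem stmt13_general (P : Triangulated.Subcategory T)
    {D : Type u'} [Category.{v'} D] (Q : T ⥤ D) [Q.IsLocalization P.W]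
    (𝒳 𝒴 : Set T) (hX : 𝒳 ⊆ P.P) (hY : 𝒴 ⊆ P.P)
    (h1 : IsCotStructureOn Set.univ 𝒳 (rperp 𝒳))
    (h2 : IsCotStructureOn Set.univ (lperp 𝒴) 𝒴)
    (h3 : IsCotStructureOn P.P 𝒳 𝒴) :
    ∀ X : T, ∃ Z ∈ rperp 𝒳 ∩ lperp ((fun B : T => B⟦(1 : ℤ)⟧) '' 𝒴),
      Nonempty (Q.obj X ≅ Q.obj Z) := by
  intro X
  obtain ⟨A, B, hA, hB, f, g, h, hAXB⟩ := h1.tri X (Set.mem_univ X)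
  obtain ⟨L, Y, hL, hY', f', g', h', hLY⟩ := h2.tri (B⟦(-1 : ℤ)⟧) (Set.mem_univ _)
  -- the distinguished triangle `Y → L⟦1⟧ → B⟦-1⟧⟦1⟧ → Y⟦1⟧`
  have hYLB := rot_of_distTriang _ (rot_of_distTriang _ hLY)
  let eB : (B⟦(-1 : ℤ)⟧)⟦(1 : ℤ)⟧ ≅ B := (shiftFunctorCompIsoId T (-1) 1 (by norm_num)).app B
  have hYperp : Y ∈ rperp 𝒳 := fun x hx => h3.orth x hx Y hY'
  refine ⟨L⟦(1 : ℤ)⟧, ⟨mem_rperp_obj₂_of_distTriang hYLB hYperp (mem_rperp_of_iso eB.symm hB),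
    shift_mem_lperp_image_shift hL 1⟩, ?_⟩
  have : IsIso (Q.map g) := P.isIso_map_mor₂_of_mem_obj₁ Q hAXB (hX hA)
  have : IsIso (Q.map (-f'⟦(1 : ℤ)⟧')) := P.isIso_map_mor₂_of_mem_obj₁ Q hYLB (hY hY')
  exact ⟨asIso (Q.map g) ≪≫ (Q.mapIso eB).symm ≪≫ (asIso (Q.map (-f'⟦(1 : ℤ)⟧'))).symm⟩

/-- Iyama–Yang reduction: let `T` be triangulated with thick subcategory `T^p`, and
`𝒳, 𝒴 ⊆ T^p` with co-t-structures `T = 𝒳 ⊥ 𝒳^⊥`, `T = ^⊥𝒴 ⊥ 𝒴`, and `T^p = 𝒳 ⊥ 𝒴`.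
Set `𝒵 = 𝒳^⊥ ∩ ^⊥(Σ𝒴)`.  Then every object of `T` is isomorphic, in the Verdier
quotient `T/T^p`, to an object of `𝒵`. -/
theorem stmt13 (P : Triangulated.Subcategory T)
    (hthick : ∀ X Y : T, (∃ (r : X ⟶ Y) (s : Y ⟶ X), s ≫ r = 𝟙 Y) → P.P X → P.P Y)
    {D : Type u'} [Category.{v'} D] (Q : T ⥤ D) [Q.IsLocalization P.W]
    (𝒳 𝒴 : Set T) (hX : 𝒳 ⊆ P.P) (hY : 𝒴 ⊆ P.P)
    (h1 : IsCotStructureOn Set.univ 𝒳 (rperp 𝒳))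
    (h2 : IsCotStructureOn Set.univ (lperp 𝒴) 𝒴)
    (h3 : IsCotStructureOn P.P 𝒳 𝒴) :
    ∀ X : T, ∃ Z ∈ rperp 𝒳 ∩ lperp ((fun B : T => B⟦(1 : ℤ)⟧) '' 𝒴),
      Nonempty (Q.obj X ≅ Q.obj Z) :=
  stmt13_general P Q 𝒳 𝒴 hX hY h1 h2 h3
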